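/- arXiv:1608.02074 — 4 statements merged into one kernel-verified Lean document; each statement's English description precedes it below -/
import Mathlib

section
/- Let φ: [0,1) → [0,∞) be a non-decreasing function, and suppose there exist constants μ ∈ (0,1) and c > 0 such that φ(r/2) ≤ 2^(−μ)·φ(r) + c·r^μ for all 0 < r < 1/2. Then there is a constant C (depending only on c, μ and φ) such that φ(r) ≤ C·(log(1/r))·r^μ for all 0 < r < 1/2. -/
/-!
In the critical case θ = 2^(-μ) the recursion becomes additive for ψ(r) = φ(r) / r^μ:
ψ(r/2) ≤ ψ(r) + 2^μ c. Hence ψ grows by at most 2^μ c per halving, and from its bound on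
[1/4, 1/2) (monotonicity) it stays below a multiple of the number of halvings, which is
about log₂(1/r).
-/

open Real Set

lemma le_add_mul_of_div_two_le_add {ψ : ℝ → ℝ} {a B K : ℝ} (hK : 0 ≤ K)
    (hstep : ∀ x, 0 < x → x < a → ψ (x / 2) ≤ ψ x + K)
    (hbase : ∀ x ∈ Ico (a / 2) a, ψ x ≤ B) (n : ℕ) :
    ∀ x ∈ Ico (a / 2 ^ (n + 1)) a, ψ x ≤ B + n * K := by
  induction n with
  | zero => simpa using hbase
  | succ n ih =>
    rintro x ⟨hxlo, hxa⟩
    push_cast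
    by_cases hx : a / 2 ^ (n + 1) ≤ x
    · linarith [ih x ⟨hx, hxa⟩]
    · rw [div_le_iff₀ (by positivity)] at hxlo
      rw [not_le, lt_div_iff₀ (by positivity)] at hx
      have hx0 : 0 < x := by nlinarith [one_le_pow₀ (M₀ := ℝ) one_le_two (n := n + 1 + 1)]
      have h2x : 2 * x ∈ Ico (a / 2 ^ (n + 1)) a := by
        rw [pow_succ] at hxlo hx
        constructor
        · rw [div_le_iff₀ (by positivity)]; linarith
        · nlinarith [one_le_pow₀ (M₀ := ℝ) one_le_two (n := n)]
      have hhalf := hstep (2 * x) (by positivity) h2x.2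
      rw [mul_div_cancel_left₀ x two_ne_zero] at hhalf
      linarith [ih (2 * x) h2x]

lemma exists_two_pow_succ_le_inv {r : ℝ} (hr : 0 < r) (hr2 : r < 1 / 2) :
    ∃ n : ℕ, 2 ^ (n + 1) ≤ 1 / r ∧ 1 / 2 / 2 ^ (n + 1) ≤ r := by
  obtain ⟨n, hle, hlt⟩ := exists_nat_pow_near (x := 1 / (2 * r)) (y := (2 : ℝ))
    (by rw [le_div_iff₀ (by positivity)]; linarith) one_lt_two
  refine ⟨n, ?_, ?_⟩
  · rw [le_div_iff₀ hr, pow_succ]; rw [le_div_iff₀ (by positivity)] at hle; linarith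
  · rw [div_le_iff₀ (by positivity)]; rw [div_lt_iff₀ (by positivity)] at hlt; linarith

lemma div_rpow_half_le_add {φ : ℝ → ℝ} {μ c r : ℝ} (hr : 0 < r)
    (h : φ (r / 2) ≤ 2 ^ (-μ) * φ r + c * r ^ μ) :
    φ (r / 2) / (r / 2) ^ μ ≤ φ r / r ^ μ + 2 ^ μ * c := by
  have hrμ : 0 < r ^ μ := rpow_pos_of_pos hr μ
  have h2μ : 0 < (2 : ℝ) ^ μ := rpow_pos_of_pos two_pos μ
  rw [rpow_neg zero_le_two] at h
  rw [div_rpow hr.le zero_le_two, div_le_iff₀ (div_pos hrμ h2μ)]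
  calc φ (r / 2) ≤ (2 ^ μ)⁻¹ * φ r + c * r ^ μ := h
    _ = (φ r / r ^ μ + 2 ^ μ * c) * (r ^ μ / 2 ^ μ) := by field_simp

theorem iteration_lemma_critical
    (φ : ℝ → ℝ) (hmono : MonotoneOn φ (Set.Ico (0:ℝ) 1))
    (hnonneg : ∀ r ∈ Set.Ico (0:ℝ) 1, 0 ≤ φ r)
    (μ c : ℝ) (hμ : μ ∈ Set.Ioo (0:ℝ) 1) (hc : 0 < c)
    (hrec : ∀ r : ℝ, 0 < r → r < 1/2 → φ (r/2) ≤ (2:ℝ) ^ (-μ) * φ r + c * r ^ μ) :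
    ∃ C > 0, ∀ r : ℝ, 0 < r → r < 1/2 →
      φ r ≤ C * Real.log (1/r) * r ^ μ := by
  set B := φ (1 / 2) / (1 / 4 : ℝ) ^ μ
  set K := (2 : ℝ) ^ μ * c
  have hB : 0 ≤ B := div_nonneg (hnonneg _ ⟨by norm_num, by norm_num⟩) (by positivity)
  have hK : 0 < K := by positivity
  have hbase : ∀ x ∈ Ico (1 / 2 / 2) (1 / 2), φ x / x ^ μ ≤ B := fun x ⟨hx4, hx2⟩ =>
    div_le_div₀ (hnonneg _ ⟨by norm_num, by norm_num⟩)
      (hmono ⟨by linarith, by linarith⟩ ⟨by norm_num, by norm_num⟩ hx2.le) (by positivity)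
      (rpow_le_rpow (by norm_num) (by linarith) hμ.1.le)
  have hbound := le_add_mul_of_div_two_le_add hK.le
    (fun x hx hx2 => div_rpow_half_le_add hx (hrec x hx hx2)) hbase
  refine ⟨(B + K) / log 2, by positivity, fun r hr hr2 => ?_⟩
  obtain ⟨n, hn, hrn⟩ := exists_two_pow_succ_le_inv hr hr2
  have hlog : ((n : ℝ) + 1) * log 2 ≤ log (1 / r) := by
    rw [← Nat.cast_succ, ← log_pow]
    exact log_le_log (by positivity) hn
  have hrμ : 0 < r ^ μ := rpow_pos_of_pos hr μ
  calc φ r = φ r / r ^ μ * r ^ μ := (div_mul_cancel₀ _ hrμ.ne').symm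
    _ ≤ (B + n * K) * r ^ μ := by gcongr; exact hbound n r ⟨hrn, hr2⟩
    _ ≤ (B + K) * (n + 1) * r ^ μ := by gcongr; nlinarith
    _ = (B + K) / log 2 * ((n + 1) * log 2) * r ^ μ := by
      field_simp [(log_pos one_lt_two).ne']
    _ ≤ (B + K) / log 2 * log (1 / r) * r ^ μ := by gcongr
end

section
/- Let φ: [0,1) → [0,∞) be a non-decreasing function and c, μ > 0 constants with μ ∈ (0,1), such that for all 0 < r < 1/2, φ(r/2) ≤ (c·(log(1/r))^(1/2) / (1 + c·(log(1/r))^(1/2)))·φ(r) + c·r^μ. Then for every α > 1 there is a constant C (depending only on c, μ, α and φ) such that φ(r) ≤ C/(log(1/r))^α for all 0 < r < 1/2. -/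
/-!
Put `L = log (1 / r)`, so that halving `r` adds `log 2` to `L`, and `r ^ μ = exp (-μ L)`.
The target bound `C / L ^ α` then drops by only `O(C / L ^ (α + 1))` when `r` is halved,
whereas the contraction factor `a / (1 + a)` with `a = c √L` gains `C / ((1 + a) L ^ α)`,
of order `C / L ^ (α + 1/2)`, and the error term `c exp (-μ L)` is smaller still. So for all
small `r` the recursion carries the bound from `r` to `r / 2`; a dyadic induction starting
from the range where monotonicity alone bounds `φ` gives it everywhere.
-/

open Real Set Filter Topology

lemma log_one_div_half {s : ℝ} (hs : 0 < s) : log (1 / (s / 2)) = log (1 / s) + log 2 := by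
  rw [one_div_div, log_div two_ne_zero hs.ne', one_div, log_inv]; ring

lemma rpow_eq_exp_neg_mul_log_one_div {s μ : ℝ} (hs : 0 < s) :
    s ^ μ = exp (-(μ * log (1 / s))) := by
  rw [rpow_def_of_pos hs, one_div, log_inv]; ring_nf

lemma one_div_rpow_mul_one_sub_le {x h α : ℝ} (hx : 0 < x) (hh : 0 ≤ h) (hα : 0 ≤ α) :
    1 / x ^ α * (1 - α * h / x) ≤ 1 / (x + h) ^ α := by
  have hxh : 0 < x + h := by linarith
  have hlog : log (x + h) ≤ log x + h / x := by
    have := log_le_sub_one_of_pos (div_pos hxh hx)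
    rw [log_div hxh.ne' hx.ne', add_div, div_self hx.ne'] at this
    linarith
  calc 1 / x ^ α * (1 - α * h / x) ≤ exp (-(α * log x)) * exp (-(α * h / x)) := by
        rw [rpow_def_of_pos hx, one_div, ← exp_neg, mul_comm (log x)]
        gcongr
        linarith [add_one_le_exp (-(α * h / x))]
    _ = exp (-(α * (log x + h / x))) := by rw [← exp_add]; ring_nf
    _ ≤ 1 / (x + h) ^ α := by
        rw [rpow_def_of_pos hxh, one_div, ← exp_neg, mul_comm (log _)]
        gcongr

lemma contraction_add_le_div_rpow_add {a α C L h ε : ℝ} (hα : 0 ≤ α) (hC : 0 ≤ C)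
    (hL : 0 < L) (hh : 0 ≤ h) (ha : 1 ≤ a) (hah : 4 * α * h * a ≤ L)
    (hε : 4 * a * ε ≤ C / L ^ α) :
    a / (1 + a) * (C / L ^ α) + ε ≤ C / (L + h) ^ α := by
  set x := C / L ^ α with hx
  have hx0 : 0 ≤ x := by positivity
  have hshift : x - x / (4 * a) ≤ C / (L + h) ^ α := by
    have hαh : α * h / L ≤ 1 / (4 * a) := by
      rw [div_le_div_iff₀ hL (by positivity)]; linarith
    calc x - x / (4 * a) = x * (1 - 1 / (4 * a)) := by ring
      _ ≤ x * (1 - α * h / L) := by gcongr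
      _ = C * (1 / L ^ α * (1 - α * h / L)) := by rw [hx]; ring
      _ ≤ C * (1 / (L + h) ^ α) := by gcongr; exact one_div_rpow_mul_one_sub_le hL hh hα
      _ = C / (L + h) ^ α := mul_one_div C _
  have hcontr : a / (1 + a) * x ≤ x - x / (2 * a) := by
    have hgain : x / (2 * a) ≤ x / (1 + a) := by gcongr; linarith
    have hsplit : a / (1 + a) * x = x - x / (1 + a) := by field_simp; ring
    linarith
  have hε' : ε ≤ x / (4 * a) := by rw [le_div_iff₀ (by positivity)]; linarith
  have hhalf : x / (4 * a) = x / (2 * a) - x / (4 * a) := by field_simp; ring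
  linarith

lemma eventually_atTop_halving_conditions {c μ : ℝ} (hc : 0 < c) (hμ : 0 < μ) (α : ℝ) :
    ∀ᶠ L in atTop, 1 ≤ c * √L ∧ 4 * α * log 2 * (c * √L) ≤ L ∧
      4 * (c * √L) * (c * exp (-(μ * L))) ≤ 1 / L ^ α := by
  have hsqrt : Tendsto (fun L : ℝ => √L) atTop atTop := by
    simpa only [sqrt_eq_rpow] using tendsto_rpow_atTop (by norm_num : (0:ℝ) < 1 / 2)
  have hdecay : ∀ᶠ L in atTop, L ^ (α + 1 / 2) * exp (-μ * L) < 1 / (4 * c ^ 2) :=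
    (tendsto_rpow_mul_exp_neg_mul_atTop_nhds_zero _ μ hμ).eventually
      (gt_mem_nhds (by positivity))
  filter_upwards [(hsqrt.const_mul_atTop hc).eventually_ge_atTop 1,
    hsqrt.eventually_ge_atTop (4 * α * log 2 * c), hdecay, eventually_gt_atTop 0]
    with L h1 h2 h3 hL
  refine ⟨h1, ?_, ?_⟩
  · calc 4 * α * log 2 * (c * √L) = (4 * α * log 2 * c) * √L := by ring
      _ ≤ √L * √L := by gcongr
      _ = L := mul_self_sqrt hL.le
  · rw [rpow_add hL, ← sqrt_eq_rpow, neg_mul, lt_div_iff₀ (by positivity)] at h3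
    rw [le_div_iff₀ (by positivity)]
    calc 4 * (c * √L) * (c * exp (-(μ * L))) * L ^ α
        = L ^ α * √L * exp (-(μ * L)) * (4 * c ^ 2) := by ring
      _ ≤ 1 := h3.le

lemma exists_forall_log_one_div_of_eventually_atTop {p : ℝ → Prop} {b : ℝ} (hb : 0 < b)
    (hp : ∀ᶠ L in atTop, p L) : ∃ r₀ ∈ Ioc 0 b, ∀ s ∈ Ioo 0 r₀, p (log (1 / s)) := by
  have hlog : Tendsto (fun s : ℝ => log (1 / s)) (𝓝[>] 0) atTop := by
    simpa only [one_div, Function.comp_def] using tendsto_log_atTop.comp tendsto_inv_nhdsGT_zero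
  obtain ⟨u, hu, hsub⟩ := mem_nhdsGT_iff_exists_Ioo_subset.1 (hlog.eventually hp)
  exact ⟨min u b, ⟨lt_min hu hb, min_le_right u b⟩,
    fun s ⟨hs, hsr⟩ => hsub ⟨hs, hsr.trans_le (min_le_left u b)⟩⟩

lemma forall_mem_Ioo_of_halving {P : ℝ → Prop} {a b : ℝ} (ha : 0 < a) (hab : 2 * a ≤ b)
    (base : ∀ r ∈ Ico a b, P r) (step : ∀ s ∈ Ioo 0 (2 * a), P s → P (s / 2)) :
    ∀ r ∈ Ioo 0 b, P r := by
  have scaled : ∀ n : ℕ, ∀ r ∈ Ico (a / 2 ^ n) b, P r := by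
    intro n
    induction n with
    | zero => simpa using base
    | succ n ih =>
      rintro r ⟨hr, hrb⟩
      by_cases har : a ≤ r
      · exact base r ⟨har, hrb⟩
      have hr0 : 0 < r := lt_of_lt_of_le (by positivity) hr
      have h2r : a / 2 ^ n ≤ 2 * r := by
        rw [pow_succ, ← div_div, div_le_iff₀ two_pos] at hr; linarith
      simpa using step (2 * r) ⟨by positivity, by linarith⟩ (ih (2 * r) ⟨h2r, by linarith⟩)
  rintro r ⟨hr0, hrb⟩
  obtain ⟨n, hn⟩ := pow_unbounded_of_one_lt (a / r) one_lt_two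
  have : a / 2 ^ n ≤ r := by
    rw [div_lt_iff₀ hr0] at hn
    rw [div_le_iff₀ (by positivity)]; linarith
  exact scaled n r ⟨this, hrb⟩

lemma le_div_rpow_of_le {x B ℓ Λ α C : ℝ} (hx : x ≤ B) (hℓ : 0 < ℓ) (hℓΛ : ℓ ≤ Λ)
    (hα : 0 ≤ α) (hC : max B 0 * Λ ^ α ≤ C) : x ≤ C / ℓ ^ α := by
  have hΛ : 0 < Λ ^ α := by have := hℓ.trans_le hℓΛ; positivity
  have hC0 : 0 ≤ C := le_trans (by positivity) hC
  calc x ≤ max B 0 := hx.trans (le_max_left B 0)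
    _ = max B 0 * Λ ^ α / Λ ^ α := by field_simp
    _ ≤ C / ℓ ^ α := by gcongr

theorem iteration_lemma_log_coefficient_general
    (φ : ℝ → ℝ) (hmono : MonotoneOn φ (Set.Ico (0:ℝ) 1))
    (c μ : ℝ) (hc : 0 < c) (hμ : μ ∈ Set.Ioo (0:ℝ) 1)
    (hrec : ∀ r : ℝ, 0 < r → r < 1/2 →
      φ (r/2) ≤ (c * Real.sqrt (Real.log (1/r)) / (1 + c * Real.sqrt (Real.log (1/r)))) * φ r
        + c * r ^ μ) :
    ∀ α : ℝ, 1 < α → ∃ C > 0, ∀ r : ℝ, 0 < r → r < 1/2 →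
      φ r ≤ C / (Real.log (1/r)) ^ α := by
  intro α hα
  obtain ⟨r₀, ⟨hr₀, hr₀_le⟩, hsmall⟩ := exists_forall_log_one_div_of_eventually_atTop
    one_half_pos (eventually_atTop_halving_conditions hc hμ.1 α)
  set C := max 1 (max (φ (1/2)) 0 * log (1 / (r₀ / 2)) ^ α)
  have hC : 1 ≤ C := le_max_left _ _
  refine ⟨C, by positivity, fun r hr hr' => forall_mem_Ioo_of_halving
    (P := fun r => φ r ≤ C / log (1 / r) ^ α) (half_pos hr₀) (by linarith) ?_ ?_ r ⟨hr, hr'⟩⟩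
  · rintro r ⟨hr₀r, hr⟩
    have hr0 : 0 < r := by linarith
    refine le_div_rpow_of_le (hmono ⟨hr0.le, by linarith⟩ ⟨by norm_num, by norm_num⟩ hr.le)
      (log_pos ?_) (log_le_log (by positivity) ?_) (by linarith) (le_max_right _ _)
    · rw [lt_one_div one_pos hr0]; linarith
    · gcongr
  · rintro s ⟨hs, hsr₀⟩ ih
    obtain ⟨ha, hah, hε⟩ := hsmall s ⟨hs, by linarith⟩
    have hL : 0 < log (1 / s) := log_pos (by rw [lt_one_div one_pos hs]; linarith)
    calc φ (s / 2) ≤ _ := hrec s hs (by linarith)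
      _ ≤ c * √(log (1 / s)) / (1 + c * √(log (1 / s))) * (C / log (1 / s) ^ α)
          + c * exp (-(μ * log (1 / s))) := by
        rw [← rpow_eq_exp_neg_mul_log_one_div hs]; gcongr
      _ ≤ C / (log (1 / s) + log 2) ^ α := contraction_add_le_div_rpow_add (by linarith)
          (by positivity) hL (log_nonneg one_le_two) ha hah (hε.trans (by gcongr))
      _ = C / log (1 / (s / 2)) ^ α := by rw [log_one_div_half hs]

theorem iteration_lemma_log_coefficient
    (φ : ℝ → ℝ) (hmono : MonotoneOn φ (Set.Ico (0:ℝ) 1))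
    (hnonneg : ∀ r ∈ Set.Ico (0:ℝ) 1, 0 ≤ φ r)
    (c μ : ℝ) (hc : 0 < c) (hμ : μ ∈ Set.Ioo (0:ℝ) 1)
    (hrec : ∀ r : ℝ, 0 < r → r < 1/2 →
      φ (r/2) ≤ (c * Real.sqrt (Real.log (1/r)) / (1 + c * Real.sqrt (Real.log (1/r)))) * φ r
        + c * r ^ μ) :
    ∀ α : ℝ, 1 < α → ∃ C > 0, ∀ r : ℝ, 0 < r → r < 1/2 →
      φ r ≤ C / (Real.log (1/r)) ^ α :=
  iteration_lemma_log_coefficient_general φ hmono c μ hc hμ hrec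
end

section
/- For every constant c > 0 and every integer n ≥ 2, the product ∏_{k=n+1}^{n²} (c·k^(1/2)/(1 + c·k^(1/2))) is bounded above by C·e^(−c'·n^(1/2)) for some constants C, c' > 0 depending only on c. -/
/-! Each factor is `x / (1 + x) = 1 - 1 / (1 + x) ≤ exp (-1 / (1 + x))` with `x = c √k ≤ c n`,
so the `n² - n` factors multiply to at most `exp (-(n² - n) / (1 + c n))`, and
`(n² - n) / (1 + c n) ≥ (n - 1) / (1 + c) ≥ √n / (2 (1 + c))`. -/

open Real Finset

lemma div_one_add_le_exp_neg_inv (x : ℝ) : x / (1 + x) ≤ exp (-(1 + x)⁻¹) := by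
  by_cases hx : 1 + x = 0
  · simp [hx]
  · have hsplit : x / (1 + x) = -(1 + x)⁻¹ + 1 := by field_simp; ring
    rw [hsplit]
    exact add_one_le_exp _

lemma prod_div_one_add_le_exp_neg_card_div {ι : Type*} (s : Finset ι) (f : ι → ℝ) (b : ℝ)
    (hf₀ : ∀ i ∈ s, 0 ≤ f i) (hfb : ∀ i ∈ s, f i ≤ b) :
    ∏ i ∈ s, f i / (1 + f i) ≤ exp (-(#s / (1 + b))) := by
  calc ∏ i ∈ s, f i / (1 + f i)
      ≤ ∏ _i ∈ s, exp (-(1 + b)⁻¹) := by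
        refine prod_le_prod (fun i hi => by have := hf₀ i hi; positivity) fun i hi => ?_
        have hpos : 0 < 1 + f i := by linarith [hf₀ i hi]
        calc f i / (1 + f i) ≤ exp (-(1 + f i)⁻¹) := div_one_add_le_exp_neg_inv _
          _ ≤ exp (-(1 + b)⁻¹) := by gcongr; exact hfb i hi
    _ = exp (-(#s / (1 + b))) := by
        rw [prod_const, ← exp_nat_mul, div_eq_mul_inv, mul_neg]

lemma cast_card_Icc_succ_sq (n : ℕ) : (#(Icc (n + 1) (n ^ 2)) : ℝ) = n ^ 2 - n := by
  have hle : n ≤ n ^ 2 := Nat.le_self_pow two_ne_zero n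
  rw [Nat.card_Icc, Nat.add_sub_add_right, Nat.cast_sub hle, Nat.cast_pow]

lemma sqrt_div_le_sq_sub_div_one_add_mul {c : ℝ} (hc : 0 ≤ c) {n : ℝ} (hn : 2 ≤ n) :
    √n / (2 * (1 + c)) ≤ (n ^ 2 - n) / (1 + c * n) := by
  have hsqrt : √n ≤ n := (sqrt_le_left (by linarith)).mpr (by nlinarith)
  rw [div_le_div_iff₀ (by positivity) (by positivity)]
  nlinarith [mul_le_mul_of_nonneg_right hsqrt (by positivity : 0 ≤ 1 + c * n),
    mul_nonneg hc (by linarith : (0 : ℝ) ≤ n - 2)]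

theorem product_decay_estimate (c : ℝ) (hc : 0 < c) :
    ∃ C > 0, ∃ c' > 0, ∀ n : ℕ, 2 ≤ n →
      (∏ k ∈ Finset.Icc (n + 1) (n ^ 2),
          c * Real.sqrt k / (1 + c * Real.sqrt k))
        ≤ C * Real.exp (-c' * Real.sqrt n) := by
  refine ⟨1, one_pos, (2 * (1 + c))⁻¹, by positivity, fun n hn => ?_⟩
  have hbound : ∀ k ∈ Icc (n + 1) (n ^ 2), c * √k ≤ c * n := fun k hk => by
    have hk : (k : ℝ) ≤ (n : ℝ) ^ 2 := by exact_mod_cast (mem_Icc.mp hk).2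
    gcongr
    exact sqrt_le_iff.mpr ⟨n.cast_nonneg, hk⟩
  calc ∏ k ∈ Icc (n + 1) (n ^ 2), c * √k / (1 + c * √k)
      ≤ exp (-((n ^ 2 - n) / (1 + c * n))) := by
        rw [← cast_card_Icc_succ_sq]
        exact prod_div_one_add_le_exp_neg_card_div _ _ _ (fun _ _ => by positivity) hbound
    _ ≤ 1 * exp (-(2 * (1 + c))⁻¹ * √n) := by
        rw [one_mul, neg_mul, ← div_eq_inv_mul]
        exact exp_le_exp.mpr <| neg_le_neg <|
          sqrt_div_le_sq_sub_div_one_add_mul hc.le (by exact_mod_cast hn)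
end

section
/- Let B: ℝ² → ℝ³ be a smooth vector field with ∫_{ℝ²} |∇B|² < ∞, and for r > 0 set μ(r) = r^(−2)∫_{B_r ∖ B_{r/2}} |B| dx. Then for all r ≥ e, μ(r) ≤ C₀·log r, where C₀ = μ(1) + √π·(∫_{ℝ² ∖ B_{1/2}} |∇B|²)^(1/2). -/
open MeasureTheory Metric Real Pointwise

noncomputable section

abbrev E2 := EuclideanSpace ℝ (Fin 2)

def pd (i : Fin 2) (f : E2 → ℝ) (x : E2) : ℝ :=
  fderiv ℝ f x (EuclideanSpace.single i (1:ℝ))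

/-- `|∇B|²` for a 3D-valued field on the plane, componentwise. -/
def gradSq (B : E2 → EuclideanSpace ℝ (Fin 3)) (x : E2) : ℝ :=
  ∑ i : Fin 3, ((pd 0 (fun y => B y i) x) ^ 2 + (pd 1 (fun y => B y i) x) ^ 2)

/-- `μ(r) = r⁻² ∫_{B_r ∖ B_{r/2}} |B|`. -/
def annAvg (B : E2 → EuclideanSpace ℝ (Fin 3)) (r : ℝ) : ℝ :=
  (r ^ 2)⁻¹ * ∫ x in ball (0:E2) r \ ball (0:E2) (r/2), ‖B x‖

-- auxiliary lemmas

lemma gradSq_nonneg (B : E2 → EuclideanSpace ℝ (Fin 3)) (x : E2) : 0 ≤ gradSq B x :=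
  Finset.sum_nonneg fun i _ => by positivity

lemma pd_eq (B : E2 → EuclideanSpace ℝ (Fin 3)) (hB : ContDiff ℝ (⊤ : ℕ∞) B) (i : Fin 2) (j : Fin 3)
    (x : E2) : pd i (fun y => B y j) x = fderiv ℝ B x (EuclideanSpace.single i (1:ℝ)) j := by
  have h : (fun y => B y j) = (EuclideanSpace.proj j : EuclideanSpace ℝ (Fin 3) →L[ℝ] ℝ) ∘ B := rfl
  rw [pd, h, fderiv_comp x (EuclideanSpace.proj j).differentiableAt (hB.differentiable (by simp) x),
    ContinuousLinearMap.fderiv]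
  rfl

lemma gradSq_eq (B : E2 → EuclideanSpace ℝ (Fin 3)) (hB : ContDiff ℝ (⊤ : ℕ∞) B) (x : E2) :
    gradSq B x = ∑ j : Fin 3, ((fderiv ℝ B x (EuclideanSpace.single 0 (1:ℝ)) j) ^ 2
      + (fderiv ℝ B x (EuclideanSpace.single 1 (1:ℝ)) j) ^ 2) := by
  unfold gradSq
  refine Finset.sum_congr rfl fun j _ => ?_
  rw [pd_eq B hB 0 j x, pd_eq B hB 1 j x]

lemma continuous_gradSq (B : E2 → EuclideanSpace ℝ (Fin 3)) (hB : ContDiff ℝ (⊤ : ℕ∞) B) :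
    Continuous (gradSq B) := by
  have hd : Continuous (fun x => fderiv ℝ B x) := hB.continuous_fderiv (by simp)
  have : Continuous (fun x => ∑ j : Fin 3, ((fderiv ℝ B x (EuclideanSpace.single 0 (1:ℝ)) j) ^ 2
      + (fderiv ℝ B x (EuclideanSpace.single 1 (1:ℝ)) j) ^ 2)) := by
    refine continuous_finset_sum _ fun j _ => ?_
    have h0 : Continuous (fun x => fderiv ℝ B x (EuclideanSpace.single 0 (1:ℝ)) j) := by
      have := hd.clm_apply (continuous_const (y := EuclideanSpace.single (0 : Fin 2) (1:ℝ)))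
      exact (EuclideanSpace.proj j : EuclideanSpace ℝ (Fin 3) →L[ℝ] ℝ).continuous.comp this
    have h1 : Continuous (fun x => fderiv ℝ B x (EuclideanSpace.single 1 (1:ℝ)) j) := by
      have := hd.clm_apply (continuous_const (y := EuclideanSpace.single (1 : Fin 2) (1:ℝ)))
      exact (EuclideanSpace.proj j : EuclideanSpace ℝ (Fin 3) →L[ℝ] ℝ).continuous.comp this
    exact (h0.pow 2).add (h1.pow 2)
  exact this.congr fun x => (gradSq_eq B hB x).symm

lemma e2_decomp (v : E2) :
    v = v 0 • EuclideanSpace.single 0 (1:ℝ) + v 1 • EuclideanSpace.single 1 (1:ℝ) := by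
  ext j; fin_cases j <;> simp [EuclideanSpace.single_apply]

lemma norm_fderiv_apply_le (B : E2 → EuclideanSpace ℝ (Fin 3)) (hB : ContDiff ℝ (⊤ : ℕ∞) B)
    (x : E2) (v : E2) : ‖fderiv ℝ B x v‖ ≤ Real.sqrt (gradSq B x) * ‖v‖ := by
  set D := fderiv ℝ B x with hD
  have hv2 : ‖v‖^2 = v 0 ^2 + v 1 ^2 := by
    rw [EuclideanSpace.norm_eq, Real.sq_sqrt (by positivity)]
    simp [Fin.sum_univ_two, sq_abs]
  have hDv : D v = v 0 • D (EuclideanSpace.single 0 (1:ℝ))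
      + v 1 • D (EuclideanSpace.single 1 (1:ℝ)) := by
    conv_lhs => rw [e2_decomp v]
    simp
  have key : ‖D v‖^2 ≤ gradSq B x * ‖v‖^2 := by
    have hn : ‖D v‖^2 = ∑ j : Fin 3, (D v j)^2 := by
      rw [EuclideanSpace.norm_eq, Real.sq_sqrt (by positivity)]
      simp [sq_abs]
    rw [hn, gradSq_eq B hB x, hv2, Finset.sum_mul]
    refine Finset.sum_le_sum fun j _ => ?_
    have : D v j = v 0 * D (EuclideanSpace.single 0 (1:ℝ)) j
        + v 1 * D (EuclideanSpace.single 1 (1:ℝ)) j := by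
      rw [hDv]; simp
    rw [this]
    nlinarith [sq_nonneg (v 0 * D (EuclideanSpace.single 1 (1:ℝ)) j
      - v 1 * D (EuclideanSpace.single 0 (1:ℝ)) j)]
  calc ‖D v‖ = Real.sqrt (‖D v‖^2) := (Real.sqrt_sq (norm_nonneg _)).symm
    _ ≤ Real.sqrt (gradSq B x * ‖v‖^2) := Real.sqrt_le_sqrt key
    _ = Real.sqrt (gradSq B x) * ‖v‖ := by
        rw [Real.sqrt_mul (gradSq_nonneg B x), Real.sqrt_sq (norm_nonneg _)]

lemma ftc_bound (B : E2 → EuclideanSpace ℝ (Fin 3)) (hB : ContDiff ℝ (⊤ : ℕ∞) B)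
    (y : E2) {r : ℝ} (hr : 1 ≤ r) :
    ‖B (r • y)‖ ≤ ‖B y‖ + ∫ s in (1:ℝ)..r, Real.sqrt (gradSq B (s • y)) * ‖y‖ := by
  have hderiv : ∀ s : ℝ, HasDerivAt (fun t => B (t • y)) (fderiv ℝ B (s • y) y) s := by
    intro s
    have h1 : HasDerivAt (fun t : ℝ => t • y) y s := by
      simpa using (hasDerivAt_id s).smul_const y
    have h2 : HasFDerivAt B (fderiv ℝ B (s • y)) (s • y) :=
      (hB.differentiable (by simp) (s • y)).hasFDerivAt
    exact h2.comp_hasDerivAt s h1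
  have hsm : Continuous (fun s : ℝ => s • y) := continuous_id.smul continuous_const
  have hcont : Continuous (fun s : ℝ => fderiv ℝ B (s • y) y) :=
    (((hB.continuous_fderiv (by simp)).comp hsm).clm_apply continuous_const)
  have hint : IntervalIntegrable (fun s : ℝ => fderiv ℝ B (s • y) y) volume 1 r :=
    hcont.intervalIntegrable 1 r
  have heq : B (r • y) - B ((1:ℝ) • y) = ∫ s in (1:ℝ)..r, fderiv ℝ B (s • y) y :=
    (intervalIntegral.integral_eq_sub_of_hasDerivAt (fun s _ => hderiv s) hint).symm
  have h1 : ‖B (r • y)‖ - ‖B y‖ ≤ ‖B (r • y) - B ((1:ℝ) • y)‖ := by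
    rw [one_smul]; exact norm_sub_norm_le _ _
  have h2 : ‖∫ s in (1:ℝ)..r, fderiv ℝ B (s • y) y‖
      ≤ ∫ s in (1:ℝ)..r, Real.sqrt (gradSq B (s • y)) * ‖y‖ := by
    refine (intervalIntegral.norm_integral_le_integral_norm hr).trans ?_
    refine intervalIntegral.integral_mono_on hr (hcont.norm.intervalIntegrable 1 r)
      ((((continuous_gradSq B hB).comp hsm).sqrt.mul continuous_const).intervalIntegrable 1 r)
      fun s _ => norm_fderiv_apply_le B hB (s • y) y
  linarith [heq ▸ h2, h1]

lemma smul_annulus {r : ℝ} (hr : 0 < r) :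
    r • (ball (0:E2) 1 \ ball (0:E2) (1/2)) = ball (0:E2) r \ ball (0:E2) (r/2) := by
  rw [Set.smul_set_sdiff₀ (ne_of_gt hr), _root_.smul_ball (ne_of_gt hr),
    _root_.smul_ball (ne_of_gt hr)]
  simp only [smul_zero]
  norm_num [abs_of_pos hr, Real.norm_eq_abs, mul_one_div]

lemma setIntegral_scale (f : E2 → ℝ) {r : ℝ} (hr : 0 < r) :
    ∫ y in ball (0:E2) 1 \ ball (0:E2) (1/2), f (r • y)
      = (r ^ 2)⁻¹ * ∫ x in ball (0:E2) r \ ball (0:E2) (r/2), f x := by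
  rw [Measure.setIntegral_comp_smul volume f _ (ne_of_gt hr), smul_annulus hr,
    finrank_euclideanSpace_fin, abs_of_nonneg (by positivity), smul_eq_mul]

lemma volume_ball_one : volume (ball (0:E2) 1) = ENNReal.ofReal π := by
  rw [EuclideanSpace.volume_ball]
  norm_num [Real.Gamma_two, Real.sq_sqrt Real.pi_nonneg]

lemma cs_integral {A : Set E2} (hfin : volume A ≠ ⊤)
    (f : E2 → ℝ) (hfc : Continuous f) (hfn : ∀ x, 0 ≤ f x)
    (hf2 : IntegrableOn (fun x => f x ^ 2) A volume) :
    ∫ y in A, f y ≤ Real.sqrt (volume A).toReal * Real.sqrt (∫ y in A, f y ^ 2) := by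
  haveI : IsFiniteMeasure (volume.restrict A) :=
    ⟨by rwa [Measure.restrict_apply_univ, lt_top_iff_ne_top]⟩
  have hmem : MemLp f 2 (volume.restrict A) :=
    (memLp_two_iff_integrable_sq hfc.aestronglyMeasurable.restrict).mpr hf2
  have hone : MemLp (fun _ : E2 => (1:ℝ)) 2 (volume.restrict A) := memLp_const 1
  have hconj : (2:ℝ).HolderConjugate 2 := Real.HolderConjugate.two_two
  have he2 : ENNReal.ofReal (2:ℝ) = 2 := by norm_num
  have hmem' : MemLp f (ENNReal.ofReal 2) (volume.restrict A) := by rw [he2]; exact hmem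
  have hone' : MemLp (fun _ : E2 => (1:ℝ)) (ENNReal.ofReal 2) (volume.restrict A) := by
    rw [he2]; exact hone
  have h := integral_mul_le_Lp_mul_Lq_of_nonneg hconj
    (Filter.Eventually.of_forall hfn) (Filter.Eventually.of_forall fun _ => zero_le_one)
    hmem' hone'
  simp only [mul_one, Real.one_rpow] at h
  have h1 : ∫ _ in A, (1:ℝ) = (volume A).toReal := by
    simp [Measure.restrict_apply_univ, Measure.real]
  have h2 : ∫ a in A, f a ^ (2:ℝ) = ∫ y in A, f y ^ 2 := by
    refine integral_congr_ae (Filter.Eventually.of_forall fun x => ?_)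
    show f x ^ (2:ℝ) = f x ^ (2:ℕ)
    rw [show ((2:ℝ)) = ((2:ℕ):ℝ) by norm_num, Real.rpow_natCast]
  rw [h1, h2] at h
  calc ∫ y in A, f y ≤ (∫ y in A, f y ^ 2) ^ (1/(2:ℝ)) * ((volume A).toReal) ^ (1/(2:ℝ)) := h
    _ = Real.sqrt (volume A).toReal * Real.sqrt (∫ y in A, f y ^ 2) := by
        rw [← Real.sqrt_eq_rpow, ← Real.sqrt_eq_rpow]; ring

theorem annular_average_log_growth
    (B : E2 → EuclideanSpace ℝ (Fin 3)) (hB : ContDiff ℝ (⊤ : ℕ∞) B)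
    (hDir : Integrable (gradSq B) volume) :
    ∀ r : ℝ, Real.exp 1 ≤ r →
      annAvg B r ≤
        (annAvg B 1 +
          Real.sqrt π * Real.sqrt (∫ x in (ball (0:E2) (1/2))ᶜ, gradSq B x)) *
          Real.log r := by
  intro r hr
  set A : Set E2 := ball (0:E2) 1 \ ball (0:E2) (1/2) with hA
  set D : ℝ := ∫ x in (ball (0:E2) (1/2))ᶜ, gradSq B x with hDdef
  have hr1 : (1:ℝ) ≤ r := le_trans (by nlinarith [Real.add_one_le_exp (1:ℝ)]) hr
  have hr0 : (0:ℝ) < r := lt_of_lt_of_le one_pos hr1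
  have hAm : MeasurableSet A := measurableSet_ball.diff measurableSet_ball
  have hAsub : A ⊆ closedBall (0:E2) 1 := fun y hy => ball_subset_closedBall hy.1
  have hAfin : volume A ≠ ⊤ :=
    ((measure_mono hAsub).trans_lt measure_closedBall_lt_top).ne
  have hπ : (volume A).toReal ≤ π := by
    have hle : volume A ≤ ENNReal.ofReal π :=
      le_trans (measure_mono Set.diff_subset) volume_ball_one.le
    exact ENNReal.toReal_le_of_le_ofReal Real.pi_nonneg hle
  have hD0 : 0 ≤ D := setIntegral_nonneg measurableSet_ball.compl fun x _ => gradSq_nonneg B x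
  have hIntOn : ∀ f : E2 → ℝ, Continuous f → IntegrableOn f A volume := fun f hf =>
    (hf.continuousOn.integrableOn_compact (isCompact_closedBall (0:E2) 1)).mono_set hAsub
  -- scaling
  have hscale : annAvg B r = ∫ y in A, ‖B (r • y)‖ := by
    rw [annAvg, ← setIntegral_scale (fun x => ‖B x‖) hr0]
  have h1eq : annAvg B 1 = ∫ y in A, ‖B y‖ := by
    rw [annAvg]; norm_num [hA]
  -- pointwise FTC bound
  have hpt : ∀ y ∈ A, ‖B (r • y)‖ ≤ ‖B y‖
      + ∫ s in (1:ℝ)..r, Real.sqrt (gradSq B (s • y)) := by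
    intro y hy
    have hy1 : ‖y‖ ≤ 1 := le_of_lt (mem_ball_zero_iff.mp hy.1)
    have h := ftc_bound B hB y hr1
    have hnn : 0 ≤ ∫ s in (1:ℝ)..r, Real.sqrt (gradSq B (s • y)) :=
      intervalIntegral.integral_nonneg hr1 fun s _ => Real.sqrt_nonneg _
    have hmono : ∫ s in (1:ℝ)..r, Real.sqrt (gradSq B (s • y)) * ‖y‖
        ≤ ∫ s in (1:ℝ)..r, Real.sqrt (gradSq B (s • y)) := by
      rw [intervalIntegral.integral_mul_const]
      nlinarith
    linarith
  set h : E2 → ℝ := fun y => ∫ s in (1:ℝ)..r, Real.sqrt (gradSq B (s • y)) with hh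
  have hFcont : Continuous (Function.uncurry fun (y:E2) (s:ℝ) =>
      Real.sqrt (gradSq B (s • y))) :=
    ((continuous_gradSq B hB).comp (continuous_snd.smul continuous_fst)).sqrt
  have hhcont : Continuous h :=
    intervalIntegral.continuous_parametric_intervalIntegral_of_continuous' hFcont 1 r
  have hGcont : Continuous (Function.uncurry fun (s:ℝ) (y:E2) =>
      Real.sqrt (gradSq B (s • y))) :=
    ((continuous_gradSq B hB).comp (continuous_fst.smul continuous_snd)).sqrt
  haveI : IsFiniteMeasure (volume.restrict A) :=
    ⟨by rwa [Measure.restrict_apply_univ, lt_top_iff_ne_top]⟩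
  haveI : IsFiniteMeasure (volume.restrict (Set.Ioc (1:ℝ) r)) :=
    ⟨by rw [Measure.restrict_apply_univ]; exact measure_Ioc_lt_top⟩
  have hJ : Integrable (Function.uncurry fun (s:ℝ) (y:E2) => Real.sqrt (gradSq B (s • y)))
      ((volume.restrict (Set.Ioc (1:ℝ) r)).prod (volume.restrict A)) := by
    obtain ⟨C, hC⟩ := ((isCompact_Icc (a := (1:ℝ)) (b := r)).prod
      (isCompact_closedBall (0:E2) 1)).exists_bound_of_continuousOn hGcont.continuousOn
    refine Integrable.mono' (integrable_const C) hGcont.aestronglyMeasurable ?_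
    rw [Measure.prod_restrict]
    refine (ae_restrict_mem (measurableSet_Ioc.prod hAm)).mono ?_
    rintro ⟨s, y⟩ ⟨hs, hy⟩
    exact hC (s, y) ⟨Set.mem_Icc.mpr ⟨hs.1.le, hs.2⟩, hAsub hy⟩
  have hhint : IntegrableOn h A volume := by
    refine hJ.integral_prod_right.congr (Filter.Eventually.of_forall fun y => ?_)
    simp only [hh]
    rw [intervalIntegral.integral_of_le hr1]
    rfl
  -- step 1
  have step1 : annAvg B r ≤ annAvg B 1 + ∫ y in A, h y := by
    rw [hscale, h1eq, ← integral_add (hIntOn _ hB.continuous.norm) hhint]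
    exact setIntegral_mono_on
      (hIntOn _ (hB.continuous.comp (continuous_const_smul r)).norm)
      ((hIntOn _ hB.continuous.norm).add hhint) hAm hpt
  -- inner Cauchy-Schwarz bound
  have inner : ∀ s ∈ Set.Ioc (1:ℝ) r, (∫ y in A, Real.sqrt (gradSq B (s • y)))
      ≤ Real.sqrt π * Real.sqrt D * s⁻¹ := by
    intro s hs
    have hs0 : (0:ℝ) < s := lt_trans one_pos hs.1
    have hcont2 : Continuous fun y : E2 => Real.sqrt (gradSq B (s • y)) :=
      ((continuous_gradSq B hB).comp (continuous_const_smul s)).sqrt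
    have hsqeq : ∀ y : E2, (Real.sqrt (gradSq B (s • y)))^2 = gradSq B (s • y) :=
      fun y => Real.sq_sqrt (gradSq_nonneg _ _)
    have hgc : Continuous fun y : E2 => gradSq B (s • y) :=
      (continuous_gradSq B hB).comp (continuous_const_smul s)
    have hint2 : IntegrableOn (fun y => (Real.sqrt (gradSq B (s • y)))^2) A volume := by
      simp only [hsqeq]
      exact hIntOn _ hgc
    have hcs := cs_integral hAfin _ hcont2 (fun y => Real.sqrt_nonneg _) hint2
    have heq2 : ∫ y in A, (Real.sqrt (gradSq B (s • y)))^2 = ∫ y in A, gradSq B (s • y) :=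
      integral_congr_ae (Filter.Eventually.of_forall fun y => hsqeq y)
    have hsc : ∫ y in A, gradSq B (s • y)
        = (s^2)⁻¹ * ∫ x in ball (0:E2) s \ ball (0:E2) (s/2), gradSq B x :=
      setIntegral_scale _ hs0
    have hsub2 : ball (0:E2) s \ ball (0:E2) (s/2) ⊆ (ball (0:E2) (1/2))ᶜ := by
      rintro x ⟨-, hx⟩ hx2
      exact hx (mem_ball_zero_iff.mpr
        (lt_of_lt_of_le (mem_ball_zero_iff.mp hx2) (by linarith [hs.1])))
    have hmono2 : ∫ x in ball (0:E2) s \ ball (0:E2) (s/2), gradSq B x ≤ D := by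
      refine setIntegral_mono_set hDir.integrableOn
        (Filter.Eventually.of_forall fun x => gradSq_nonneg B x)
        (HasSubset.Subset.eventuallyLE hsub2)
    have hbound : ∫ y in A, gradSq B (s • y) ≤ (s^2)⁻¹ * D := by
      rw [hsc]
      exact mul_le_mul_of_nonneg_left hmono2 (by positivity)
    have hsqrtbd : Real.sqrt (∫ y in A, (Real.sqrt (gradSq B (s • y)))^2)
        ≤ Real.sqrt D * s⁻¹ := by
      rw [heq2]
      refine le_trans (Real.sqrt_le_sqrt hbound) ?_
      rw [Real.sqrt_mul (by positivity), Real.sqrt_inv, Real.sqrt_sq hs0.le]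
      ring_nf
      exact le_refl _
    calc ∫ y in A, Real.sqrt (gradSq B (s • y))
        ≤ Real.sqrt (volume A).toReal
          * Real.sqrt (∫ y in A, (Real.sqrt (gradSq B (s • y)))^2) := hcs
      _ ≤ Real.sqrt π * (Real.sqrt D * s⁻¹) := by
          refine mul_le_mul (Real.sqrt_le_sqrt hπ) hsqrtbd (Real.sqrt_nonneg _)
            (Real.sqrt_nonneg _)
      _ = Real.sqrt π * Real.sqrt D * s⁻¹ := by ring
  -- swap and integrate in s
  have hswap : ∫ y in A, (∫ s in Set.Ioc (1:ℝ) r, Real.sqrt (gradSq B (s • y)))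
      = ∫ s in Set.Ioc (1:ℝ) r, ∫ y in A, Real.sqrt (gradSq B (s • y)) :=
    (integral_integral_swap hJ).symm
  have hmarg : IntegrableOn (fun s => ∫ y in A, Real.sqrt (gradSq B (s • y)))
      (Set.Ioc (1:ℝ) r) volume := hJ.integral_prod_left
  have hmajint : IntegrableOn (fun s : ℝ => Real.sqrt π * Real.sqrt D * s⁻¹)
      (Set.Ioc (1:ℝ) r) volume := by
    refine (ContinuousOn.integrableOn_compact isCompact_Icc ?_).mono_set Set.Ioc_subset_Icc_self
    refine continuousOn_const.mul (ContinuousOn.inv₀ continuousOn_id fun x hx => ?_)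
    exact ne_of_gt (lt_of_lt_of_le one_pos hx.1)
  have step2 : ∫ y in A, h y ≤ Real.sqrt π * Real.sqrt D * Real.log r := by
    have heq : ∫ y in A, h y
        = ∫ s in Set.Ioc (1:ℝ) r, ∫ y in A, Real.sqrt (gradSq B (s • y)) := by
      rw [← hswap]
      refine integral_congr_ae (Filter.Eventually.of_forall fun y => ?_)
      simp only [hh]
      rw [intervalIntegral.integral_of_le hr1]
    rw [heq]
    calc ∫ s in Set.Ioc (1:ℝ) r, ∫ y in A, Real.sqrt (gradSq B (s • y))
        ≤ ∫ s in Set.Ioc (1:ℝ) r, Real.sqrt π * Real.sqrt D * s⁻¹ :=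
          setIntegral_mono_on hmarg hmajint measurableSet_Ioc inner
      _ = Real.sqrt π * Real.sqrt D * Real.log r := by
          rw [← intervalIntegral.integral_of_le hr1, intervalIntegral.integral_const_mul,
            integral_inv_of_pos one_pos hr0]
          simp
  -- conclusion
  have hlog : 1 ≤ Real.log r := by
    rw [Real.le_log_iff_exp_le hr0]; exact hr
  have hann1 : 0 ≤ annAvg B 1 := by
    rw [h1eq]; exact setIntegral_nonneg hAm fun x _ => norm_nonneg _
  have hsqrt : 0 ≤ Real.sqrt π * Real.sqrt D :=
    mul_nonneg (Real.sqrt_nonneg _) (Real.sqrt_nonneg _)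
  nlinarith [step1, step2, hlog, hann1, hsqrt]
end
end
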